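/- Let A and B be local rings and let B be an A-algebra such that: the structure map A → B is a local homomorphism, B is finitely generated as an A-module, B is an étale A-algebra, and the induced homomorphism of residue fields A/m_A → B/m_B is bijective. Then the structure map A → B is bijective, i.e., an isomorphism of rings. -/

import Mathlib

universe u

/-!
Since `B` is unramified over `A`, `m_A B = m_B`, so `B = A + m_A B` by the isomorphism on
residue fields and Nakayama's lemma shows that `A → B` is surjective. Its kernel `I` is then
finitely generated (finite presentation) and idempotent (formal smoothness of a quotient `A ⧸ I`
means exactly `I = I²`), and it lies in `m_A`, so Nakayama's lemma again gives `I = 0`.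
-/

open IsLocalRing

lemma Ideal.eq_bot_of_isIdempotentElem_of_le_jacobson_bot {R : Type*} [CommRing R]
    {I : Ideal R} (hfg : I.FG) (hI : IsIdempotentElem I) (hjac : I ≤ (⊥ : Ideal R).jacobson) :
    I = ⊥ :=
  Submodule.eq_bot_of_le_smul_of_le_jacobson_bot I I hfg (by rw [smul_eq_mul, hI.eq]) hjac

lemma IsLocalRing.algebraMap_surjective_of_residueField_map_surjective
    {A B : Type*} [CommRing A] [IsLocalRing A] [CommRing B] [IsLocalRing B] [Algebra A B]
    [IsLocalHom (algebraMap A B)] [Module.Finite A B] [Algebra.FormallyUnramified A B]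
    (h : Function.Surjective (ResidueField.map (algebraMap A B))) :
    Function.Surjective (algebraMap A B) := by
  change Function.Surjective (Algebra.linearMap A B)
  rw [← LinearMap.range_eq_top, ← top_le_iff]
  apply Submodule.le_of_le_smul_of_le_jacobson_bot Module.Finite.fg_top (maximalIdeal_le_jacobson _)
  rw [Ideal.smul_top_eq_map, Algebra.FormallyUnramified.map_maximalIdeal]
  rintro b -
  obtain ⟨a, ha⟩ := residue_surjective.exists.mp (h (residue B b))
  rw [ResidueField.map_residue, ← sub_eq_zero, ← map_sub, residue_eq_zero_iff] at ha
  rw [← sub_sub_self (algebraMap A B a) b]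
  exact sub_mem (Submodule.mem_sup_left ⟨a, rfl⟩) (Submodule.mem_sup_right ha)

lemma IsLocalRing.algebraMap_injective_of_surjective_of_formallySmooth
    {A B : Type*} [CommRing A] [IsLocalRing A] [CommRing B] [Nontrivial B] [Algebra A B]
    [Algebra.FinitePresentation A B] [Algebra.FormallySmooth A B]
    (hs : Function.Surjective (algebraMap A B)) :
    Function.Injective (algebraMap A B) := by
  have hfg : (RingHom.ker (algebraMap A B)).FG :=
    Algebra.FinitePresentation.ker_fG_of_surjective (Algebra.ofId A B) hs
  have hidem := (Algebra.FormallySmooth.iff_of_surjective hs).mp inferInstance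
  have hjac : RingHom.ker (algebraMap A B) ≤ (⊥ : Ideal A).jacobson :=
    (le_maximalIdeal (RingHom.ker_ne_top _)).trans (maximalIdeal_le_jacobson _)
  exact (RingHom.injective_iff_ker_eq_bot _).mpr
    (Ideal.eq_bot_of_isIdempotentElem_of_le_jacobson_bot hfg hidem hjac)

/-- A finite étale morphism of local rings that is a local homomorphism and induces an
isomorphism on residue fields is an isomorphism. -/
theorem finite_etale_local_iso_on_residue_fields_is_iso
    (A B : Type u) [CommRing A] [IsLocalRing A] [CommRing B] [IsLocalRing B]
    [Algebra A B] [IsLocalHom (algebraMap A B)] [Module.Finite A B]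
    [Algebra.Etale A B]
    (h : Function.Bijective (IsLocalRing.ResidueField.map (algebraMap A B))) :
    Function.Bijective (algebraMap A B) := by
  have hs := algebraMap_surjective_of_residueField_map_surjective h.surjective
  exact ⟨algebraMap_injective_of_surjective_of_formallySmooth hs, hs⟩
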